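/- arXiv:1708.01974 — 5 statements merged into one kernel-verified Lean document; each statement's English description precedes it below -/
import Mathlib

section
/- Concentration onto the pseudo-true parameter value: Assume the hypotheses of the posterior-concentration theorem (either the polynomial- or exponential-deviation case), so that Π_ε[{θ : d(b(θ), b₀) ≥ ε* + δ_n} | η_n(y)] → 0 in P₀-probability for some sequence δ_n → 0, where ε* := inf_{θ∈Θ} d(b₀, b(θ)) > 0. Suppose further that θ* := argmin_{θ∈Θ} d(b₀, b(θ)) exists and is well-separated, i.e., for every δ > 0 there exists γ(δ) > 0 such that inf over all θ ∈ Θ with d₁(θ, θ*) > δ of d(b(θ), b₀) is at least ε* + γ(δ) (d₁ a metric on Θ). Then for every δ > 0, the ABC posterior mass Π_ε[{θ ∈ Θ : d₁(θ, θ*) > δ} | η_n(y)] converges to 0 in P₀-probability as n → ∞. -/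
/-!
Well-separation turns distance from `θ*` into excess discrepancy: once `δ_n ≤ γ(δ)`, every
`θ ∈ Θ` with `d₁(θ, θ*) > δ` satisfies `d(b(θ), b₀) ≥ ε* + δ_n`. The ABC posterior mass of the
first set is therefore bounded by that of the second, which tends to `0` in probability.
-/

open MeasureTheory Filter Real

namespace MeasureTheory

variable {α ι : Type*} {m : MeasurableSpace α} {μ : Measure α}

theorem setIntegral_div_le_setIntegral_div {F : α → ℝ} {s t u : Set α} (hF : ∀ x, 0 ≤ F x)
    (hst : s ⊆ t) (htu : t ⊆ u) :
    (∫ x in s, F x ∂μ) / (∫ x in u, F x ∂μ) ≤ (∫ x in t, F x ∂μ) / ∫ x in u, F x ∂μ := by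
  by_cases hu : IntegrableOn F u μ
  · exact div_le_div_of_nonneg_right
      (setIntegral_mono_set (hu.mono_set htu) (.of_forall hF) hst.eventuallyLE)
      (integral_nonneg hF)
  · simp [integral_undef hu]

theorem TendstoInMeasure.squeeze_zero {l : Filter ι} {f g : ι → α → ℝ}
    (hfg : ∀ᶠ i in l, ∀ᵐ x ∂μ, 0 ≤ f i x ∧ f i x ≤ g i x)
    (hg : TendstoInMeasure μ g l fun _ => 0) : TendstoInMeasure μ f l fun _ => 0 := by
  intro ε hε
  refine tendsto_of_tendsto_of_tendsto_of_le_of_le' tendsto_const_nhds (hg ε hε)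
    (.of_forall fun _ => zero_le) ?_
  filter_upwards [hfg] with i hi
  refine measure_mono_ae <| hi.mono fun x ⟨hf0, hfg⟩ (hx : ε ≤ _) => ?_
  calc ε ≤ edist (f i x) 0 := hx
    _ ≤ edist (g i x) 0 := by
      simp only [edist_dist, Real.dist_0_eq_abs, abs_of_nonneg hf0, abs_of_nonneg (hf0.trans hfg)]
      exact ENNReal.ofReal_le_ofReal hfg

end MeasureTheory

theorem abc_posterior_concentration_pseudo_true_general
    {kθ kη : ℕ}
    {Ω : Type*} [MeasurableSpace Ω]
    (P₀ : Measure Ω)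
    -- parameter space: a measurable subset of ℝ^{kθ} carrying the prior Π and a metric d₁
    (Θ : Set (EuclideanSpace ℝ (Fin kθ)))
    (Pr : Measure (EuclideanSpace ℝ (Fin kθ)))
    (d₁ : EuclideanSpace ℝ (Fin kθ) → EuclideanSpace ℝ (Fin kθ) → ℝ)
    -- d is a metric on ℝ^{kη}
    (d : EuclideanSpace ℝ (Fin kη) → EuclideanSpace ℝ (Fin kη) → ℝ)
    -- laws of the simulated summary statistics, measurable in θ
    (μ : ℕ → EuclideanSpace ℝ (Fin kθ) → Measure (EuclideanSpace ℝ (Fin kη)))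
    -- observed summary statistics
    (η : ℕ → Ω → EuclideanSpace ℝ (Fin kη))
    -- binding function and limit of the observed summaries
    (b : EuclideanSpace ℝ (Fin kθ) → EuclideanSpace ℝ (Fin kη))
    (b₀ : EuclideanSpace ℝ (Fin kη))
    -- ε* = inf_{θ∈Θ} d(b₀, b(θ)) > 0
    (εstar : ℝ)
    -- tolerance sequence
    (ε : ℕ → ℝ)
    -- θ* = argmin_{θ∈Θ} d(b₀, b(θ)), well separated
    (θstar : EuclideanSpace ℝ (Fin kθ))
    (hsep : ∀ δ : ℝ, 0 < δ → ∃ γ : ℝ, 0 < γ ∧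
      ∀ θ ∈ Θ, δ < d₁ θ θstar → εstar + γ ≤ d (b θ) b₀)
    -- conclusion of the posterior-concentration theorem, for some δ_n → 0
    (δseq : ℕ → ℝ) (hδ0 : Tendsto δseq atTop (nhds 0))
    (hconc : TendstoInMeasure P₀
      (fun n ω =>
        (∫ θ in {θ ∈ Θ | εstar + δseq n ≤ d (b θ) b₀},
            (μ n θ {t | d t (η n ω) ≤ ε n}).toReal ∂Pr) /
        (∫ θ in Θ, (μ n θ {t | d t (η n ω) ≤ ε n}).toReal ∂Pr))
      atTop (fun _ => 0)) :
    ∀ δ : ℝ, 0 < δ →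
      TendstoInMeasure P₀
        (fun n ω =>
          (∫ θ in {θ ∈ Θ | δ < d₁ θ θstar},
              (μ n θ {t | d t (η n ω) ≤ ε n}).toReal ∂Pr) /
          (∫ θ in Θ, (μ n θ {t | d t (η n ω) ≤ ε n}).toReal ∂Pr))
        atTop (fun _ => 0) := by
  intro δ hδ
  obtain ⟨γ, hγ, hγsep⟩ := hsep δ hδ
  refine hconc.squeeze_zero ?_
  filter_upwards [hδ0.eventually_lt_const hγ] with n hn
  refine .of_forall fun ω => ⟨div_nonneg (integral_nonneg fun _ => ENNReal.toReal_nonneg)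
    (integral_nonneg fun _ => ENNReal.toReal_nonneg), ?_⟩
  have hfar : {θ ∈ Θ | δ < d₁ θ θstar} ⊆ {θ ∈ Θ | εstar + δseq n ≤ d (b θ) b₀} :=
    fun θ ⟨hθ, hθfar⟩ => ⟨hθ, by linarith [hγsep θ hθ hθfar]⟩
  exact setIntegral_div_le_setIntegral_div (fun _ => ENNReal.toReal_nonneg) hfar
    (Set.sep_subset _ _)

/-- **Concentration onto the pseudo-true parameter value** (Corollary 1 of Frazier,
Robert & Rousseau). Assuming the conclusion of the posterior-concentration theorem,
`Π_ε[{θ : d(b(θ), b₀) ≥ ε* + δ_n} | η_n(y)] → 0` in `P₀`-probability for some `δ_n → 0`,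
with `ε* = inf_{θ∈Θ} d(b₀, b(θ)) > 0`, and that the minimizer `θ*` exists and is
well-separated, the ABC posterior mass of `{θ ∈ Θ : d₁(θ, θ*) > δ}` tends to `0`
in `P₀`-probability for every `δ > 0`. -/
theorem abc_posterior_concentration_pseudo_true
    {kθ kη : ℕ}
    {Ω : Type*} [MeasurableSpace Ω]
    (P₀ : Measure Ω) [IsProbabilityMeasure P₀]
    -- parameter space: a measurable subset of ℝ^{kθ} carrying the prior Π and a metric d₁
    (Θ : Set (EuclideanSpace ℝ (Fin kθ))) (hΘ : MeasurableSet Θ)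
    (Pr : Measure (EuclideanSpace ℝ (Fin kθ))) [IsProbabilityMeasure Pr]
    (d₁ : EuclideanSpace ℝ (Fin kθ) → EuclideanSpace ℝ (Fin kθ) → ℝ)
    (hd₁_self : ∀ x, d₁ x x = 0)
    (hd₁_eq : ∀ x y, d₁ x y = 0 → x = y)
    (hd₁_symm : ∀ x y, d₁ x y = d₁ y x)
    (hd₁_tri : ∀ x y z, d₁ x z ≤ d₁ x y + d₁ y z)
    -- d is a metric on ℝ^{kη}
    (d : EuclideanSpace ℝ (Fin kη) → EuclideanSpace ℝ (Fin kη) → ℝ)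
    (hd_self : ∀ x, d x x = 0)
    (hd_eq : ∀ x y, d x y = 0 → x = y)
    (hd_symm : ∀ x y, d x y = d y x)
    (hd_tri : ∀ x y z, d x z ≤ d x y + d y z)
    -- laws of the simulated summary statistics, measurable in θ
    (μ : ℕ → EuclideanSpace ℝ (Fin kθ) → Measure (EuclideanSpace ℝ (Fin kη)))
    (hμ_prob : ∀ n θ, IsProbabilityMeasure (μ n θ))
    (hμ_meas : ∀ (n : ℕ) (s : Set (EuclideanSpace ℝ (Fin kη))), MeasurableSet s →
      Measurable fun θ => μ n θ s)
    -- observed summary statistics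
    (η : ℕ → Ω → EuclideanSpace ℝ (Fin kη))
    (hη_meas : ∀ n, Measurable (η n))
    -- binding function and limit of the observed summaries
    (b : EuclideanSpace ℝ (Fin kθ) → EuclideanSpace ℝ (Fin kη)) (hb_cont : ContinuousOn b Θ)
    (hb_inj : Set.InjOn b Θ)
    (b₀ : EuclideanSpace ℝ (Fin kη))
    -- ε* = inf_{θ∈Θ} d(b₀, b(θ)) > 0
    (εstar : ℝ) (hεstar : IsGLB ((fun θ => d b₀ (b θ)) '' Θ) εstar)
    (hεstar_pos : 0 < εstar)
    -- tolerance sequence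
    (ε : ℕ → ℝ)
    -- θ* = argmin_{θ∈Θ} d(b₀, b(θ)), well separated
    (θstar : EuclideanSpace ℝ (Fin kθ)) (hθstar_mem : θstar ∈ Θ)
    (hθstar_min : d b₀ (b θstar) = εstar)
    (hsep : ∀ δ : ℝ, 0 < δ → ∃ γ : ℝ, 0 < γ ∧
      ∀ θ ∈ Θ, δ < d₁ θ θstar → εstar + γ ≤ d (b θ) b₀)
    -- conclusion of the posterior-concentration theorem, for some δ_n → 0
    (δseq : ℕ → ℝ) (hδ0 : Tendsto δseq atTop (nhds 0))
    (hconc : TendstoInMeasure P₀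
      (fun n ω =>
        (∫ θ in {θ ∈ Θ | εstar + δseq n ≤ d (b θ) b₀},
            (μ n θ {t | d t (η n ω) ≤ ε n}).toReal ∂Pr) /
        (∫ θ in Θ, (μ n θ {t | d t (η n ω) ≤ ε n}).toReal ∂Pr))
      atTop (fun _ => 0)) :
    ∀ δ : ℝ, 0 < δ →
      TendstoInMeasure P₀
        (fun n ω =>
          (∫ θ in {θ ∈ Θ | δ < d₁ θ θstar},
              (μ n θ {t | d t (η n ω) ≤ ε n}).toReal ∂Pr) /
          (∫ θ in Θ, (μ n θ {t | d t (η n ω) ≤ ε n}).toReal ∂Pr))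
        atTop (fun _ => 0) :=
  abc_posterior_concentration_pseudo_true_general P₀ Θ Pr d₁ d μ η b b₀ εstar ε θstar hsep δseq hδ0
    hconc
end

section
/- Failure of ABC posterior concentration when the tolerance shrinks below ε* (Proposition 1): In the two-dimensional Gaussian setup described in the context, suppose v_θ / v_{θ*} = σ(θ) with σ : ℝ → (0,∞) continuous and σ(b̄₀/2)² ≥ 3, and suppose the prior Π has a positive continuous density on [−b̄₀, b̄₀]. Then for δ > 0 small enough, Π_ε{θ : |θ − θ*| ≤ δ | η(y)} = o(Π_ε{θ : |θ − b̄₀/2| ≤ δ | η(y)}) = o(1); that is, the ratio Π_ε{|θ − θ*| ≤ δ | η(y)} / Π_ε{|θ − b̄₀/2| ≤ δ | η(y)} converges to 0 in P₀-probability, and in particular Π_ε{|θ − θ*| ≤ δ | η(y)} converges to 0 in P₀-probability, so the ABC posterior does not concentrate on the pseudo-true value θ* = 0. -/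
/-!
Near `θ* = 0` the simulated mean `b θ` stays at distance at least `√2 b̄₀` from `b₀`, while near
`b̄₀ / 2` it is within `√3 b̄₀` of it; the observed summary and the acceptance ball lie within
`O(1/√n)` of `b₀`. The acceptance probability of `θ` is therefore `exp (-n d² / (2 v_θ²))` up to
factors `exp O(1)`, with `d` the distance of `b θ` to `b₀`. Since `v_{b̄₀/2}² ≥ 3 v_{θ*}²`, the
exponential rate near `θ*` beats the one near `b̄₀ / 2`, so the ratio of posterior masses decays
like `exp (-c n)` uniformly over bounded `Z̃_y`, and tightness of `Z̃_y` turns this into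
convergence in probability.
-/

open MeasureTheory Filter Real Topology Metric
open scoped ENNReal

theorem norm_add_sq_le_add_mul {E : Type*} [SeminormedAddCommGroup E] (u w : E) {η : ℝ}
    (hη : 0 < η) : ‖u + w‖ ^ 2 ≤ (1 + η) * ‖u‖ ^ 2 + (1 + η⁻¹) * ‖w‖ ^ 2 :=
  calc ‖u + w‖ ^ 2 ≤ (‖u‖ + ‖w‖) ^ 2 := by gcongr; exact norm_add_le u w
    _ = (1 + η) * ‖u‖ ^ 2 + (1 + η⁻¹) * ‖w‖ ^ 2 - (η * ‖u‖ - ‖w‖) ^ 2 / η := by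
      field_simp; ring
    _ ≤ _ := sub_le_self _ (by positivity)

section WithDensity

variable {α : Type*} [MeasurableSpace α] {μ : Measure α} {f : α → ℝ} {s : Set α} {c : ℝ}

theorem withDensity_ofReal_apply_le (hs : MeasurableSet s) (h : ∀ x ∈ s, f x ≤ c) :
    μ.withDensity (fun x => ENNReal.ofReal (f x)) s ≤ ENNReal.ofReal c * μ s := by
  rw [withDensity_apply _ hs, ← setLIntegral_const]
  exact setLIntegral_mono measurable_const fun x hx => ENNReal.ofReal_le_ofReal (h x hx)

theorem toReal_withDensity_ofReal_apply_le (hs : MeasurableSet s) (hμs : μ s ≠ ∞) (hc : 0 ≤ c)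
    (h : ∀ x ∈ s, f x ≤ c) :
    (μ.withDensity (fun x => ENNReal.ofReal (f x)) s).toReal ≤ c * μ.real s := by
  simpa [ENNReal.toReal_mul, hc, Measure.real] using
    ENNReal.toReal_mono (by finiteness) (withDensity_ofReal_apply_le hs h)

theorem le_toReal_withDensity_ofReal_apply (hf : Measurable f) (hs : MeasurableSet s)
    (hfin : μ.withDensity (fun x => ENNReal.ofReal (f x)) s ≠ ∞) (hc : 0 ≤ c)
    (h : ∀ x ∈ s, c ≤ f x) :
    c * μ.real s ≤ (μ.withDensity (fun x => ENNReal.ofReal (f x)) s).toReal := by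
  have hle : ENNReal.ofReal c * μ s ≤ μ.withDensity (fun x => ENNReal.ofReal (f x)) s := by
    rw [withDensity_apply _ hs, ← setLIntegral_const]
    exact setLIntegral_mono hf.ennreal_ofReal fun x hx => ENNReal.ofReal_le_ofReal (h x hx)
  simpa [ENNReal.toReal_mul, hc, Measure.real] using ENNReal.toReal_mono hfin hle

theorem withDensity_ofReal_apply_pos (hf : AEMeasurable f μ) (hpos : ∀ x ∈ s, 0 < f x)
    (hs : 0 < μ s) : 0 < μ.withDensity (fun x => ENNReal.ofReal (f x)) s := by
  rw [pos_iff_ne_zero, Ne, withDensity_apply_eq_zero' hf.ennreal_ofReal]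
  have hsub : s ⊆ {x | ENNReal.ofReal (f x) ≠ 0} := fun x hx =>
    (ENNReal.ofReal_pos.mpr (hpos x hx)).ne'
  rw [Set.inter_eq_right.mpr hsub]
  exact hs.ne'

end WithDensity

/-- Where `f` is not integrable on `u` the denominator is the junk value `0`, and so is the
ratio. -/
theorem setIntegral_div_setIntegral_le {α : Type*} [MeasurableSpace α] {P : Measure α}
    [IsProbabilityMeasure P] {f : α → ℝ} (hf : ∀ x, 0 ≤ f x) {s t u : Set α}
    (ht : MeasurableSet t) (htu : t ⊆ u) {a c : ℝ} (ha : 0 ≤ a)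
    (hc : 0 < c) (hfs : ∀ x ∈ s, f x ≤ a) (hft : ∀ x ∈ t, c ≤ f x) (hPt : 0 < P.real t) :
    (∫ x in s, f x ∂P) / (∫ x in u, f x ∂P) ≤ a / (c * P.real t) := by
  have hnum : ∫ x in s, f x ∂P ≤ a := by
    have := norm_setIntegral_le_of_norm_le_const (measure_lt_top P s)
      fun x hx => (Real.norm_of_nonneg (hf x)).trans_le (hfs x hx)
    calc ∫ x in s, f x ∂P ≤ a * P.real s := (le_abs_self _).trans this
      _ ≤ a := mul_le_of_le_one_right ha measureReal_le_one
  by_cases hint : IntegrableOn f u P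
  · have hden : c * P.real t ≤ ∫ x in u, f x ∂P :=
      calc c * P.real t = P.real t • c := by rw [smul_eq_mul, mul_comm]
        _ ≤ ∫ x in t, f x ∂P :=
          setIntegral_ge_of_const_le ht (measure_ne_top P t) hft (hint.mono_set htu)
        _ ≤ ∫ x in u, f x ∂P :=
          setIntegral_mono_set hint (Eventually.of_forall hf) (Eventually.of_forall htu)
    exact div_le_div₀ ha hnum (by positivity) hden
  · rw [integral_undef hint, div_zero]
    positivity

theorem tendstoInMeasure_zero_of_tight {Ω E : Type*} [MeasurableSpace Ω] [Norm E] {P : Measure Ω}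
    {Z : ℕ → Ω → E}
    (hZ : ∀ r : ℝ, 0 < r → ∃ M : ℝ, limsup (fun n => P {ω | M < ‖Z n ω‖}) atTop < ENNReal.ofReal r)
    {f : ℕ → Ω → ℝ} (hf : ∀ M : ℝ, ∃ g : ℕ → ℝ, Tendsto g atTop (𝓝 0) ∧
      ∀ᶠ n in atTop, ∀ ω, ‖Z n ω‖ ≤ M → |f n ω| ≤ g n) :
    TendstoInMeasure P f atTop fun _ => 0 := by
  refine tendstoInMeasure_iff_norm.mpr fun ε hε => ?_
  rw [ENNReal.tendsto_nhds_zero]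
  intro r hr
  obtain ⟨q, -, hq, hqr⟩ := ENNReal.lt_iff_exists_real_btwn.mp hr
  obtain ⟨M, hM⟩ := hZ q (ENNReal.ofReal_pos.mp hq)
  obtain ⟨g, hg, hfg⟩ := hf M
  filter_upwards [eventually_lt_of_limsup_lt hM, hg.eventually (gt_mem_nhds hε), hfg]
    with n hPn hgn hfgn
  refine le_trans (measure_mono fun ω hω => ?_) (hPn.trans hqr).le
  by_contra hZω
  have := hfgn ω (not_lt.mp hZω)
  rw [Set.mem_ofPred_eq, sub_zero, Real.norm_eq_abs] at hω
  linarith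

theorem exists_pos_forall_abs_sub_le_mem {v : ℝ → ℝ} {θ₀ : ℝ} {S : Set ℝ} (hv : ContinuousAt v θ₀)
    (hS : S ∈ 𝓝 (v θ₀)) : ∃ δ > 0, ∀ θ, |θ - θ₀| ≤ δ → v θ ∈ S := by
  obtain ⟨δ, hδ, hball⟩ := nhds_basis_closedBall.mem_iff.mp (hv.preimage_mem_nhds hS)
  exact ⟨δ, hδ, fun θ hθ => hball (by rwa [mem_closedBall, Real.dist_eq])⟩

section Gaussian

/-- With `w = v` and `r = ‖t - m‖ ^ 2` this is the density at `t` of `N(m, (v² / n) I)` in dimension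
two; the envelopes with `w ≠ v` bound it when only a range of variances is known. -/
noncomputable def gaussEnvelope (n v w r : ℝ) : ℝ :=
  (2 * π * v ^ 2 / n)⁻¹ * exp (-(n * r) / (2 * w ^ 2))

variable {E : Type*} [NormedAddCommGroup E]

noncomputable def isoGaussDensity (n v : ℝ) (m t : E) : ℝ :=
  gaussEnvelope n v v (‖t - m‖ ^ 2)

noncomputable def isoGaussian [MeasureSpace E] (n v : ℝ) (m : E) : Measure E :=
  volume.withDensity fun t => ENNReal.ofReal (isoGaussDensity n v m t)

variable {n v v' w w' r r' : ℝ}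

theorem gaussEnvelope_nonneg (hn : 0 ≤ n) : 0 ≤ gaussEnvelope n v w r := by
  unfold gaussEnvelope; positivity

theorem gaussEnvelope_anti (hn : 0 ≤ n) (hv : 0 < v) (hvv' : v ≤ v') (hw : 0 < w) (hww' : w ≤ w')
    (hr : 0 ≤ r) (hr' : r' ≤ r) : gaussEnvelope n v' w r ≤ gaussEnvelope n v w' r' := by
  unfold gaussEnvelope
  gcongr ?_ * exp ?_
  · rw [inv_div, inv_div]
    gcongr
  · rw [neg_div, neg_div, neg_le_neg_iff]
    calc n * r' / (2 * w' ^ 2) ≤ n * r / (2 * w' ^ 2) := by gcongr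
      _ ≤ n * r / (2 * w ^ 2) := by gcongr

variable [MeasureSpace E] {vlo vhi : ℝ} {m : E} {s : Set E}

theorem toReal_isoGaussian_apply_le (hn : 0 ≤ n) (hvlo : 0 < vlo) (hv : v ∈ Set.Icc vlo vhi)
    (hs : MeasurableSet s) (hsfin : volume s ≠ ∞) (hr : ∀ t ∈ s, r ≤ ‖t - m‖ ^ 2) :
    (isoGaussian n v m s).toReal ≤ gaussEnvelope n vlo vhi r * volume.real s :=
  toReal_withDensity_ofReal_apply_le hs hsfin (gaussEnvelope_nonneg hn) fun t ht =>
    gaussEnvelope_anti hn hvlo hv.1 (hvlo.trans_le hv.1) hv.2 (sq_nonneg _) (hr t ht)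

theorem le_toReal_isoGaussian_apply [BorelSpace E] (hn : 0 ≤ n) (hvlo : 0 < vlo)
    (hv : v ∈ Set.Icc vlo vhi) (hs : MeasurableSet s) (hsfin : volume s ≠ ∞)
    (hR : ∀ t ∈ s, ‖t - m‖ ^ 2 ≤ r) :
    gaussEnvelope n vhi vlo r * volume.real s ≤ (isoGaussian n v m s).toReal := by
  have hv0 : 0 < v := hvlo.trans_le hv.1
  have hfin : isoGaussian n v m s ≠ ∞ :=
    ne_top_of_le_ne_top (by finiteness) <| withDensity_ofReal_apply_le hs fun t _ =>
      gaussEnvelope_anti hn hv0 le_rfl hv0 le_rfl (sq_nonneg _) (sq_nonneg (‖t - m‖))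
  have hmeas : Measurable (isoGaussDensity n v m) := by
    unfold isoGaussDensity gaussEnvelope; fun_prop
  refine le_toReal_withDensity_ofReal_apply hmeas hs hfin (gaussEnvelope_nonneg hn) fun t ht => ?_
  exact gaussEnvelope_anti hn hv0 hv.2 hvlo hv.1 ((sq_nonneg _).trans (hR t ht)) (hR t ht)

variable {b : E} {η d x : ℝ}

theorem toReal_isoGaussian_apply_le_of_le_norm_sub (hη : 0 < η) (hn : 0 ≤ n) (hvlo : 0 < vlo)
    (hv : v ∈ Set.Icc vlo vhi) (hs : MeasurableSet s) (hsfin : volume s ≠ ∞)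
    (hd : d ≤ ‖m - b‖ ^ 2) (hx : ∀ t ∈ s, ‖t - b‖ ^ 2 ≤ x) :
    (isoGaussian n v m s).toReal ≤
      gaussEnvelope n vlo vhi ((1 + η)⁻¹ * d - η⁻¹ * x) * volume.real s :=
  toReal_isoGaussian_apply_le hn hvlo hv hs hsfin fun t ht => by
    have hyoung := norm_add_sq_le_add_mul (m - t) (t - b) hη
    rw [sub_add_sub_cancel, norm_sub_rev m t] at hyoung
    have hr : (1 + η)⁻¹ * d - η⁻¹ * x = (1 + η)⁻¹ * (d - (1 + η⁻¹) * x) := by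
      field_simp; ring
    rw [hr, inv_mul_le_iff₀ (by positivity)]
    nlinarith [mul_le_mul_of_nonneg_left (hx t ht) (by positivity : (0 : ℝ) ≤ 1 + η⁻¹)]

theorem le_toReal_isoGaussian_apply_of_norm_sub_le [BorelSpace E] (hη : 0 < η) (hn : 0 ≤ n)
    (hvlo : 0 < vlo) (hv : v ∈ Set.Icc vlo vhi) (hs : MeasurableSet s) (hsfin : volume s ≠ ∞)
    (hd : ‖m - b‖ ^ 2 ≤ d) (hx : ∀ t ∈ s, ‖t - b‖ ^ 2 ≤ x) :
    gaussEnvelope n vhi vlo ((1 + η) * d + (1 + η⁻¹) * x) * volume.real s ≤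
      (isoGaussian n v m s).toReal :=
  le_toReal_isoGaussian_apply hn hvlo hv hs hsfin fun t ht => by
    have hyoung := norm_add_sq_le_add_mul (b - m) (t - b) hη
    rw [add_comm (b - m), sub_add_sub_cancel, norm_sub_rev b] at hyoung
    nlinarith [mul_le_mul_of_nonneg_left (hx t ht) (by positivity : (0 : ℝ) ≤ 1 + η⁻¹),
      mul_le_mul_of_nonneg_left hd (by positivity : (0 : ℝ) ≤ 1 + η)]

end Gaussian

/-- As `v₁² ≥ 3 v₀²`, the decay rate `1000/1331 · a²/v₀²` of the numerator exceeds the rate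
`55/81 · a²/v₀²` of the denominator by more than `1/16 · a²/v₀²`. -/
theorem gaussEnvelope_div_gaussEnvelope_le {n a v₀ v₁ κ : ℝ} (hn : 0 < n) (hv₀ : 0 < v₀)
    (hv : 3 * v₀ ^ 2 ≤ v₁ ^ 2) :
    gaussEnvelope n (9 / 10 * v₀) (11 / 10 * v₀) (20 / 11 * a ^ 2 - 10 * κ ^ 2 / n) /
        gaussEnvelope n (11 / 10 * v₁) (9 / 10 * v₁) (33 / 10 * a ^ 2 + 11 * κ ^ 2 / n) ≤
      121 * v₁ ^ 2 / (81 * v₀ ^ 2) * exp (7 * κ ^ 2 / v₀ ^ 2) *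
        exp (-(a ^ 2 / (16 * v₀ ^ 2) * n)) := by
  have hv₁ : 0 < v₁ ^ 2 := lt_of_lt_of_le (by positivity) hv
  have hden : (33 / 10 * n * a ^ 2 + 11 * κ ^ 2) / (2 * (9 / 10 * v₁) ^ 2) ≤
      (33 / 10 * n * a ^ 2 + 11 * κ ^ 2) / (2 * (81 / 100) * (3 * v₀ ^ 2)) :=
    div_le_div_of_nonneg_left (by positivity) (by positivity) (by nlinarith)
  have hexp : -(n * (20 / 11 * a ^ 2 - 10 * κ ^ 2 / n)) / (2 * (11 / 10 * v₀) ^ 2) -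
      -(n * (33 / 10 * a ^ 2 + 11 * κ ^ 2 / n)) / (2 * (9 / 10 * v₁) ^ 2) ≤
      7 * κ ^ 2 / v₀ ^ 2 + -(a ^ 2 / (16 * v₀ ^ 2) * n) := by
    have e₀ : -(n * (20 / 11 * a ^ 2 - 10 * κ ^ 2 / n)) / (2 * (11 / 10 * v₀) ^ 2) =
        (10 * κ ^ 2 - 20 / 11 * n * a ^ 2) / (2 * (121 / 100) * v₀ ^ 2) := by
      field_simp; ring
    have e₁ : -(n * (33 / 10 * a ^ 2 + 11 * κ ^ 2 / n)) / (2 * (9 / 10 * v₁) ^ 2) =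
        -((33 / 10 * n * a ^ 2 + 11 * κ ^ 2) / (2 * (9 / 10 * v₁) ^ 2)) := by
      field_simp
    rw [e₀, e₁, sub_neg_eq_add]
    refine (add_le_add_right hden _).trans (le_of_sub_nonneg ?_)
    field_simp
    ring_nf
    nlinarith [sq_nonneg κ, sq_nonneg a, mul_nonneg hn.le (sq_nonneg a)]
  calc _ = 121 * v₁ ^ 2 / (81 * v₀ ^ 2) *
        exp (-(n * (20 / 11 * a ^ 2 - 10 * κ ^ 2 / n)) / (2 * (11 / 10 * v₀) ^ 2) -
          -(n * (33 / 10 * a ^ 2 + 11 * κ ^ 2 / n)) / (2 * (9 / 10 * v₁) ^ 2)) := by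
        unfold gaussEnvelope
        rw [exp_sub]
        field_simp
        ring
    _ ≤ _ := by
      rw [mul_assoc, ← exp_add]
      gcongr

theorem tendsto_mul_exp_neg_mul_natCast (C : ℝ) {γ : ℝ} (hγ : 0 < γ) :
    Tendsto (fun n : ℕ => C * exp (-(γ * n))) atTop (𝓝 0) := by
  simpa using (tendsto_exp_neg_atTop_nhds_zero.comp
    (tendsto_natCast_atTop_atTop.const_mul_atTop hγ)).const_mul C

theorem norm_add_inv_sqrt_smul_sub_add_le {E : Type*} [NormedAddCommGroup E] [NormedSpace ℝ E]
    {b₀ z : E} {n M B e : ℝ} (hn : 0 < n) (hz : ‖z‖ ≤ M) (he : √n * e ≤ B) :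
    ‖b₀ + (√n)⁻¹ • z - b₀‖ + e ≤ (M + B) / √n := by
  have hsn : 0 < √n := Real.sqrt_pos.mpr hn
  rw [add_sub_cancel_left, norm_smul, norm_inv, Real.norm_of_nonneg hsn.le, add_div,
    inv_mul_eq_div]
  gcongr
  rwa [le_div_iff₀ hsn, mul_comm]

theorem norm_sub_sq_le_of_mem_closedBall {E : Type*} [SeminormedAddCommGroup E] {y b t : E}
    {e r : ℝ} (hy : ‖y - b‖ + e ≤ r) (ht : t ∈ closedBall y e) : ‖t - b‖ ^ 2 ≤ r ^ 2 := by
  rw [mem_closedBall_iff_norm] at ht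
  gcongr
  linarith [norm_sub_le_norm_sub_add_norm_sub t y b]

theorem norm_sub_sq_of_ofLp_eq {x y : EuclideanSpace ℝ (Fin 2)} {θ a : ℝ}
    (hx : x.ofLp = ![θ, θ]) (hy : y.ofLp = ![a, -a]) : ‖x - y‖ ^ 2 = 2 * θ ^ 2 + 2 * a ^ 2 := by
  rw [EuclideanSpace.real_norm_sq_eq, Fin.sum_univ_two]
  simp [hx, hy]
  ring

/-- `abcMass P K A y e / abcMass P K univ y e` is the ABC posterior `Π_ε[A | η(y)]`, for the prior
`P`, the law `K θ` of the simulated summary, the observed summary `y` and the tolerance `e`. -/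
noncomputable def abcMass {E : Type*} [SeminormedAddCommGroup E] [MeasurableSpace E]
    (P : Measure ℝ) (K : ℝ → Measure E) (A : Set ℝ) (y : E) (e : ℝ) : ℝ :=
  ∫ θ in A, (K θ {t | ‖t - y‖ ≤ e}).toReal ∂P

theorem abcMass_nonneg {E : Type*} [SeminormedAddCommGroup E] [MeasurableSpace E]
    (P : Measure ℝ) (K : ℝ → Measure E) (A : Set ℝ) (y : E) (e : ℝ) : 0 ≤ abcMass P K A y e :=
  integral_nonneg fun _ => ENNReal.toReal_nonneg

theorem abc_posterior_ratio_le {E : Type*} [NormedAddCommGroup E] [MeasureSpace E] [BorelSpace E]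
    [ProperSpace E] [IsFiniteMeasureOnCompacts (volume : Measure E)]
    [(volume : Measure E).IsOpenPosMeasure] {b : ℝ → E} {b₀ : E} {a v₀ v₁ δ : ℝ} {v : ℝ → ℝ}
    (hb : ∀ θ, ‖b θ - b₀‖ ^ 2 = 2 * θ ^ 2 + 2 * a ^ 2) (hδ : δ ≤ a / 10)
    (hv₀ : 0 < v₀) (hv₁ : 0 < v₁) (hv : 3 * v₀ ^ 2 ≤ v₁ ^ 2)
    (hnum : ∀ θ, |θ| ≤ δ → v θ ∈ Set.Icc (9 / 10 * v₀) (11 / 10 * v₀))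
    (hden : ∀ θ, |θ - a / 2| ≤ δ → v θ ∈ Set.Icc (9 / 10 * v₁) (11 / 10 * v₁))
    {P : Measure ℝ} [IsProbabilityMeasure P] (hP : 0 < P.real {θ | |θ - a / 2| ≤ δ})
    {u : Set ℝ} (hu : {θ | |θ - a / 2| ≤ δ} ⊆ u)
    {n : ℕ} (hn : 0 < n) {y : E} {e κ : ℝ} (he : 0 < e) (hy : ‖y - b₀‖ + e ≤ κ / √n) :
    abcMass P (fun θ => isoGaussian n (v θ) (b θ)) {θ | |θ| ≤ δ} y e /
        abcMass P (fun θ => isoGaussian n (v θ) (b θ)) u y e ≤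
      121 * v₁ ^ 2 / (81 * v₀ ^ 2) / P.real {θ | |θ - a / 2| ≤ δ} *
        exp (7 * κ ^ 2 / v₀ ^ 2) * exp (-(a ^ 2 / (16 * v₀ ^ 2) * n)) := by
  have hn' : (0 : ℝ) < n := Nat.cast_pos.mpr hn
  have hball : {t | ‖t - y‖ ≤ e} = closedBall y e := Set.ext fun t => mem_closedBall_iff_norm.symm
  have hsfin : volume (closedBall y e) ≠ ∞ := measure_closedBall_lt_top.ne
  have hV : 0 < volume.real (closedBall y e) :=
    ENNReal.toReal_pos (measure_closedBall_pos volume y he).ne' hsfin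
  have hnear : ∀ t ∈ closedBall y e, ‖t - b₀‖ ^ 2 ≤ κ ^ 2 / n := fun t ht => by
    simpa [div_pow, sq_sqrt hn'.le] using norm_sub_sq_le_of_mem_closedBall hy ht
  have hupper : ∀ θ ∈ {θ | |θ| ≤ δ}, (isoGaussian n (v θ) (b θ) (closedBall y e)).toReal ≤
      gaussEnvelope n (9 / 10 * v₀) (11 / 10 * v₀) (20 / 11 * a ^ 2 - 10 * κ ^ 2 / n) *
        volume.real (closedBall y e) := fun θ hθ => by
    have h := toReal_isoGaussian_apply_le_of_le_norm_sub (m := b θ) (b := b₀) (η := 1 / 10)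
      (d := 2 * a ^ 2) (by norm_num) hn'.le (by positivity) (hnum θ hθ) measurableSet_closedBall
      hsfin (by rw [hb]; nlinarith) hnear
    convert h using 3
    ring
  have hlower : ∀ θ ∈ {θ | |θ - a / 2| ≤ δ},
      gaussEnvelope n (11 / 10 * v₁) (9 / 10 * v₁) (33 / 10 * a ^ 2 + 11 * κ ^ 2 / n) *
        volume.real (closedBall y e) ≤ (isoGaussian n (v θ) (b θ) (closedBall y e)).toReal :=
    fun θ (hθ : |θ - a / 2| ≤ δ) => by
    obtain ⟨hθ₁, hθ₂⟩ := abs_le.mp hθ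
    have h := le_toReal_isoGaussian_apply_of_norm_sub_le (m := b θ) (b := b₀) (η := 1 / 10)
      (d := 3 * a ^ 2) (by norm_num) hn'.le (by positivity) (hden θ hθ) measurableSet_closedBall
      hsfin (by rw [hb]; nlinarith) hnear
    convert h using 3
    ring
  unfold abcMass
  rw [hball]
  calc _ ≤ gaussEnvelope n (9 / 10 * v₀) (11 / 10 * v₀) (20 / 11 * a ^ 2 - 10 * κ ^ 2 / n) *
          volume.real (closedBall y e) /
        (gaussEnvelope n (11 / 10 * v₁) (9 / 10 * v₁) (33 / 10 * a ^ 2 + 11 * κ ^ 2 / n) *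
          volume.real (closedBall y e) * P.real {θ | |θ - a / 2| ≤ δ}) :=
        setIntegral_div_setIntegral_le (fun _ => ENNReal.toReal_nonneg)
          (measurableSet_le (by fun_prop) measurable_const) hu
          (mul_nonneg (gaussEnvelope_nonneg hn'.le) hV.le) (by unfold gaussEnvelope; positivity)
          hupper hlower hP
    _ = gaussEnvelope n (9 / 10 * v₀) (11 / 10 * v₀) (20 / 11 * a ^ 2 - 10 * κ ^ 2 / n) /
          gaussEnvelope n (11 / 10 * v₁) (9 / 10 * v₁) (33 / 10 * a ^ 2 + 11 * κ ^ 2 / n) /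
          P.real {θ | |θ - a / 2| ≤ δ} := by
        rw [mul_right_comm _ (volume.real _), mul_div_mul_right _ _ hV.ne', div_div]
    _ ≤ 121 * v₁ ^ 2 / (81 * v₀ ^ 2) * exp (7 * κ ^ 2 / v₀ ^ 2) *
          exp (-(a ^ 2 / (16 * v₀ ^ 2) * n)) / P.real {θ | |θ - a / 2| ≤ δ} := by
        gcongr
        exact gaussEnvelope_div_gaussEnvelope_le hn' hv₀ hv
    _ = _ := by ring

theorem abc_no_concentration_below_epsilon_star_general
    {Ω : Type*} [MeasurableSpace Ω]
    (P₀ : Measure Ω)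
    (bbar₀ : ℝ) (hbbar₀ : 0 < bbar₀)
    -- binding function and pseudo-true limit of the observed summaries
    (b : ℝ → EuclideanSpace ℝ (Fin 2)) (hb : ∀ θ, b θ = ![θ, θ])
    (b₀ : EuclideanSpace ℝ (Fin 2)) (hb₀ : b₀ = ![bbar₀, -bbar₀])
    -- simulated-noise scale v_θ and the ratio σ(θ) = v_θ / v_{θ*} (θ* = 0)
    (vθ : ℝ → ℝ) (hvθ_pos : ∀ θ, 0 < vθ θ) (hvθ_cont : Continuous vθ)
    (σ : ℝ → ℝ) (hσ_def : ∀ θ, σ θ = vθ θ / vθ 0)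
    (hσ_half : 3 ≤ σ (bbar₀ / 2) ^ 2)
    -- law of the simulated summary: η(z) ∼ N(b(θ), (v_θ²/n) I₂)
    (μ : ℕ → ℝ → Measure (EuclideanSpace ℝ (Fin 2)))
    (hμ : ∀ (n : ℕ) (θ : ℝ), 0 < n →
      μ n θ = volume.withDensity (fun t => ENNReal.ofReal
        ((2 * π * vθ θ ^ 2 / (n : ℝ))⁻¹ *
          Real.exp (-((n : ℝ) * ‖t - b θ‖ ^ 2) / (2 * vθ θ ^ 2)))))
    -- observed summary: η(y) = b₀ + Z̃_y/√n with Z̃_y tight under P₀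
    (Zy : ℕ → Ω → EuclideanSpace ℝ (Fin 2))
    (hZy_tight : ∀ r : ℝ, 0 < r → ∃ Mc : ℝ,
      Filter.limsup (fun n => P₀ {ω | Mc < ‖Zy n ω‖}) atTop < ENNReal.ofReal r)
    -- prior with positive continuous density on [−bbar₀, bbar₀]
    (πd : ℝ → ℝ) (hπd_meas : Measurable πd)
    (hπd_pos : ∀ θ ∈ Set.Icc (-bbar₀) bbar₀, 0 < πd θ)
    (Pr : Measure ℝ) (hPr : Pr = volume.withDensity (fun θ => ENNReal.ofReal (πd θ)))
    [IsProbabilityMeasure Pr]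
    -- tolerance: ε_n > 0 with √n ε_n bounded
    (ε : ℕ → ℝ) (hε_pos : ∀ n, 0 < ε n)
    (hε_bdd : ∃ B : ℝ, ∀ n : ℕ, Real.sqrt n * ε n ≤ B) :
    ∃ δ₀ : ℝ, 0 < δ₀ ∧ ∀ δ : ℝ, 0 < δ → δ ≤ δ₀ →
      -- Π_ε{|θ − θ*| ≤ δ} = o(Π_ε{|θ − bbar₀/2| ≤ δ}) in P₀-probability (θ* = 0)
      TendstoInMeasure P₀
        (fun n ω =>
          (∫ θ in {θ : ℝ | |θ| ≤ δ},
              (μ n θ {t | ‖t - (b₀ + (Real.sqrt n)⁻¹ • Zy n ω)‖ ≤ ε n}).toReal ∂Pr) /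
          (∫ θ in {θ : ℝ | |θ - bbar₀ / 2| ≤ δ},
              (μ n θ {t | ‖t - (b₀ + (Real.sqrt n)⁻¹ • Zy n ω)‖ ≤ ε n}).toReal ∂Pr))
        atTop (fun _ => 0) ∧
      -- and Π_ε{|θ − θ*| ≤ δ} = o(1) in P₀-probability
      TendstoInMeasure P₀
        (fun n ω =>
          (∫ θ in {θ : ℝ | |θ| ≤ δ},
              (μ n θ {t | ‖t - (b₀ + (Real.sqrt n)⁻¹ • Zy n ω)‖ ≤ ε n}).toReal ∂Pr) /
          (∫ θ, (μ n θ {t | ‖t - (b₀ + (Real.sqrt n)⁻¹ • Zy n ω)‖ ≤ ε n}).toReal ∂Pr))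
        atTop (fun _ => 0) := by
  obtain ⟨B, hB⟩ := hε_bdd
  have hv : 3 * vθ 0 ^ 2 ≤ vθ (bbar₀ / 2) ^ 2 := by
    have h := hσ_half
    rwa [hσ_def, div_pow, le_div_iff₀ (pow_pos (hvθ_pos 0) 2)] at h
  have hband : ∀ θ₀, ∃ δ > 0, ∀ θ, |θ - θ₀| ≤ δ →
      vθ θ ∈ Set.Icc (9 / 10 * vθ θ₀) (11 / 10 * vθ θ₀) := fun θ₀ =>
    exists_pos_forall_abs_sub_le_mem hvθ_cont.continuousAt
      (Icc_mem_nhds (by linarith [hvθ_pos θ₀]) (by linarith [hvθ_pos θ₀]))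
  obtain ⟨δ₁, hδ₁, hnum⟩ := hband 0
  obtain ⟨δ₂, hδ₂, hden⟩ := hband (bbar₀ / 2)
  refine ⟨min (min δ₁ δ₂) (bbar₀ / 10), by positivity, fun δ hδ hδ₀ => ?_⟩
  simp only [le_min_iff] at hδ₀
  have hP : 0 < Pr.real {θ : ℝ | |θ - bbar₀ / 2| ≤ δ} := by
    refine ENNReal.toReal_pos (hPr ▸ withDensity_ofReal_apply_pos hπd_meas.aemeasurable
      (fun θ hθ => hπd_pos θ ?_) (measure_closedBall_pos volume (bbar₀ / 2) hδ)).ne'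
      (measure_ne_top _ _)
    obtain ⟨h₁, h₂⟩ := abs_le.mp (show |θ - bbar₀ / 2| ≤ δ from hθ)
    constructor <;> linarith
  have hbound : ∀ u, {θ : ℝ | |θ - bbar₀ / 2| ≤ δ} ⊆ u → ∀ M : ℝ, ∃ g : ℕ → ℝ,
      Tendsto g atTop (𝓝 0) ∧ ∀ᶠ n in atTop, ∀ ω, ‖Zy n ω‖ ≤ M →
        |abcMass Pr (μ n) {θ | |θ| ≤ δ} (b₀ + (√(n : ℝ))⁻¹ • Zy n ω) (ε n) /
          abcMass Pr (μ n) u (b₀ + (√(n : ℝ))⁻¹ • Zy n ω) (ε n)| ≤ g n := by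
    refine fun u hu M => ⟨_, tendsto_mul_exp_neg_mul_natCast (121 * vθ (bbar₀ / 2) ^ 2 /
      (81 * vθ 0 ^ 2) / Pr.real {θ : ℝ | |θ - bbar₀ / 2| ≤ δ} * exp (7 * (M + B) ^ 2 / vθ 0 ^ 2))
      (γ := bbar₀ ^ 2 / (16 * vθ 0 ^ 2)) (by have := hvθ_pos 0; positivity), ?_⟩
    filter_upwards [eventually_gt_atTop 0] with n hn ω hω
    have hμn : μ n = fun θ => isoGaussian n (vθ θ) (b θ) := funext fun θ => hμ n θ hn
    rw [hμn, abs_of_nonneg (div_nonneg (abcMass_nonneg ..) (abcMass_nonneg ..))]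
    exact abc_posterior_ratio_le (fun θ => norm_sub_sq_of_ofLp_eq (hb θ) (by rw [hb₀]))
      hδ₀.2 (hvθ_pos 0) (hvθ_pos _) hv
      (fun θ hθ => hnum θ (by rw [sub_zero]; exact hθ.trans hδ₀.1.1))
      (fun θ hθ => hden θ (hθ.trans hδ₀.1.2)) hP hu hn (hε_pos n)
      (norm_add_inv_sqrt_smul_sub_add_le (Nat.cast_pos.mpr hn) hω (hB n))
  exact ⟨tendstoInMeasure_zero_of_tight hZy_tight (hbound _ subset_rfl),
    tendstoInMeasure_zero_of_tight hZy_tight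
      (by simpa only [abcMass, setIntegral_univ] using hbound _ (Set.subset_univ _))⟩

/-- **Failure of ABC posterior concentration when the tolerance shrinks below ε***
(Proposition 1 of Frazier, Robert & Rousseau). In the two-dimensional Gaussian setup
with `b(θ) = (θ,θ)ᵀ`, `b₀ = (bbar₀, −bbar₀)ᵀ`, simulated summaries
`N(b(θ), (v_θ²/n) I₂)` and observed summaries `b₀ + Z̃_y/√n` with `Z̃_y` tight, if
`v_θ/v_{θ*} = σ(θ)` with `σ` continuous and `σ(bbar₀/2)² ≥ 3`, and the prior has a
positive continuous density on `[−bbar₀, bbar₀]`, then for `δ > 0` small enough the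
ABC posterior mass of `{|θ − θ*| ≤ δ}` is `o` of that of `{|θ − bbar₀/2| ≤ δ}`, and in
particular tends to `0` in `P₀`-probability (θ* = 0). -/
theorem abc_no_concentration_below_epsilon_star
    {Ω : Type*} [MeasurableSpace Ω]
    (P₀ : Measure Ω) [IsProbabilityMeasure P₀]
    (bbar₀ : ℝ) (hbbar₀ : 0 < bbar₀)
    -- binding function and pseudo-true limit of the observed summaries
    (b : ℝ → EuclideanSpace ℝ (Fin 2)) (hb : ∀ θ, b θ = ![θ, θ])
    (b₀ : EuclideanSpace ℝ (Fin 2)) (hb₀ : b₀ = ![bbar₀, -bbar₀])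
    -- simulated-noise scale v_θ and the ratio σ(θ) = v_θ / v_{θ*} (θ* = 0)
    (vθ : ℝ → ℝ) (hvθ_pos : ∀ θ, 0 < vθ θ) (hvθ_cont : Continuous vθ)
    (σ : ℝ → ℝ) (hσ_def : ∀ θ, σ θ = vθ θ / vθ 0)
    (hσ_cont : Continuous σ) (hσ_half : 3 ≤ σ (bbar₀ / 2) ^ 2)
    -- law of the simulated summary: η(z) ∼ N(b(θ), (v_θ²/n) I₂)
    (μ : ℕ → ℝ → Measure (EuclideanSpace ℝ (Fin 2)))
    (hμ : ∀ (n : ℕ) (θ : ℝ), 0 < n →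
      μ n θ = volume.withDensity (fun t => ENNReal.ofReal
        ((2 * π * vθ θ ^ 2 / (n : ℝ))⁻¹ *
          Real.exp (-((n : ℝ) * ‖t - b θ‖ ^ 2) / (2 * vθ θ ^ 2)))))
    -- observed summary: η(y) = b₀ + Z̃_y/√n with Z̃_y tight under P₀
    (Zy : ℕ → Ω → EuclideanSpace ℝ (Fin 2))
    (hZy_meas : ∀ n, Measurable (Zy n))
    (hZy_tight : ∀ r : ℝ, 0 < r → ∃ Mc : ℝ,
      Filter.limsup (fun n => P₀ {ω | Mc < ‖Zy n ω‖}) atTop < ENNReal.ofReal r)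
    -- prior with positive continuous density on [−bbar₀, bbar₀]
    (πd : ℝ → ℝ) (hπd_meas : Measurable πd) (hπd_nonneg : ∀ θ, 0 ≤ πd θ)
    (hπd_cont : ContinuousOn πd (Set.Icc (-bbar₀) bbar₀))
    (hπd_pos : ∀ θ ∈ Set.Icc (-bbar₀) bbar₀, 0 < πd θ)
    (Pr : Measure ℝ) (hPr : Pr = volume.withDensity (fun θ => ENNReal.ofReal (πd θ)))
    [IsProbabilityMeasure Pr]
    -- tolerance: ε_n > 0 with √n ε_n bounded
    (ε : ℕ → ℝ) (hε_pos : ∀ n, 0 < ε n)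
    (hε_bdd : ∃ B : ℝ, ∀ n : ℕ, Real.sqrt n * ε n ≤ B) :
    ∃ δ₀ : ℝ, 0 < δ₀ ∧ ∀ δ : ℝ, 0 < δ → δ ≤ δ₀ →
      -- Π_ε{|θ − θ*| ≤ δ} = o(Π_ε{|θ − bbar₀/2| ≤ δ}) in P₀-probability (θ* = 0)
      TendstoInMeasure P₀
        (fun n ω =>
          (∫ θ in {θ : ℝ | |θ| ≤ δ},
              (μ n θ {t | ‖t - (b₀ + (Real.sqrt n)⁻¹ • Zy n ω)‖ ≤ ε n}).toReal ∂Pr) /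
          (∫ θ in {θ : ℝ | |θ - bbar₀ / 2| ≤ δ},
              (μ n θ {t | ‖t - (b₀ + (Real.sqrt n)⁻¹ • Zy n ω)‖ ≤ ε n}).toReal ∂Pr))
        atTop (fun _ => 0) ∧
      -- and Π_ε{|θ − θ*| ≤ δ} = o(1) in P₀-probability
      TendstoInMeasure P₀
        (fun n ω =>
          (∫ θ in {θ : ℝ | |θ| ≤ δ},
              (μ n θ {t | ‖t - (b₀ + (Real.sqrt n)⁻¹ • Zy n ω)‖ ≤ ε n}).toReal ∂Pr) /
          (∫ θ, (μ n θ {t | ‖t - (b₀ + (Real.sqrt n)⁻¹ • Zy n ω)‖ ≤ ε n}).toReal ∂Pr))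
        atTop (fun _ => 0) :=
  abc_no_concentration_below_epsilon_star_general P₀ bbar₀ hbbar₀ b hb b₀ hb₀ vθ hvθ_pos hvθ_cont σ
    hσ_def hσ_half μ hμ Zy hZy_tight πd hπd_meas hπd_pos Pr hPr ε hε_pos hε_bdd
end

section
/- Numerator bound for the misspecified ABC posterior, polynomial-deviation case: Assume [A1] with polynomial deviations: μ_{n,θ}{t : d(t, b(θ)) > u} ≤ c(θ)(v_n u)^{-κ} for all u ≤ u₀, with c measurable and ∫_Θ c dΠ < ∞. Let ε* := inf_{θ∈Θ} d(b(θ), b₀), and let δ > 0, ε_n > 0, and s_y ∈ ℝ^{k_η} satisfy δ ≥ 4(ε_n − ε*), d(s_y, b₀) ≤ δ/2, and δ/4 ≤ u₀. Then ∫_{{θ : d(b(θ), b₀) ≥ ε* + δ}} μ_{n,θ}{t : d(t, s_y) ≤ ε_n} dΠ(θ) ≤ 4^κ (v_n δ)^{-κ} ∫_Θ c(θ) dΠ(θ). -/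
open MeasureTheory Filter Real

/-- **Numerator bound for the misspecified ABC posterior, polynomial-deviation case**:
under [A1] with polynomial deviations, if `δ ≥ 4(ε_n − ε*)`, `d(s_y, b₀) ≤ δ/2` and
`δ/4 ≤ u₀`, then the ABC numerator over `{θ : d(b(θ), b₀) ≥ ε* + δ}` is at most
`4^κ (v_n δ)^{-κ} ∫_Θ c dΠ`. -/
theorem abc_numerator_bound_polynomial
    {kη : ℕ} {Θ : Type*} [MeasurableSpace Θ]
    (Pr : Measure Θ) [IsProbabilityMeasure Pr]
    -- d is a metric on ℝ^{kη}
    (d : EuclideanSpace ℝ (Fin kη) → EuclideanSpace ℝ (Fin kη) → ℝ)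
    (hd_self : ∀ x, d x x = 0)
    (hd_eq : ∀ x y, d x y = 0 → x = y)
    (hd_symm : ∀ x y, d x y = d y x)
    (hd_tri : ∀ x y z, d x z ≤ d x y + d y z)
    -- laws of the simulated summary statistics, measurable in θ
    (n : ℕ)
    (μ : ℕ → Θ → Measure (EuclideanSpace ℝ (Fin kη)))
    (hμ_prob : ∀ n θ, IsProbabilityMeasure (μ n θ))
    (hμ_meas : ∀ (n : ℕ) (s : Set (EuclideanSpace ℝ (Fin kη))), MeasurableSet s →
      Measurable fun θ => μ n θ s)
    (b : Θ → EuclideanSpace ℝ (Fin kη)) (hb_meas : Measurable b)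
    (b₀ : EuclideanSpace ℝ (Fin kη))
    (c : Θ → ℝ) (hc_meas : Measurable c) (hc_nonneg : ∀ θ, 0 ≤ c θ)
    (hc_int : Integrable c Pr)
    (v : ℕ → ℝ) (hv_pos : ∀ n, 0 < v n)
    (u₀ κ : ℝ) (hu₀ : 0 < u₀) (hκ : 0 < κ)
    -- [A1], polynomial deviations
    (hA1 : ∀ (n : ℕ) (θ : Θ), ∀ u : ℝ, 0 < u → u ≤ u₀ →
      (μ n θ {t | u < d t (b θ)}).toReal ≤ c θ * (v n * u) ^ (-κ))
    -- ε* = inf_{θ∈Θ} d(b(θ), b₀)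
    (εstar : ℝ) (hεstar : εstar = ⨅ θ : Θ, d (b θ) b₀)
    (δ εn : ℝ) (hδ : 0 < δ) (hεn : 0 < εn)
    (sy : EuclideanSpace ℝ (Fin kη))
    (h1 : 4 * (εn - εstar) ≤ δ)
    (h2 : d sy b₀ ≤ δ / 2)
    (h3 : δ / 4 ≤ u₀) :
    (∫ θ in {θ : Θ | εstar + δ ≤ d (b θ) b₀},
        (μ n θ {t | d t sy ≤ εn}).toReal ∂Pr) ≤
      (4 : ℝ) ^ κ * (v n * δ) ^ (-κ) * ∫ θ, c θ ∂Pr := by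
  classical
  set S : Set Θ := {θ : Θ | εstar + δ ≤ d (b θ) b₀} with hS
  set f : Θ → ℝ := fun θ => (μ n θ {t | d t sy ≤ εn}).toReal with hf
  set C : ℝ := (v n * (δ / 4)) ^ (-κ) with hC
  set g : Θ → ℝ := fun θ => c θ * C with hg
  have hvδ : 0 < v n * δ := mul_pos (hv_pos n) hδ
  have hvδ4 : 0 < v n * (δ / 4) := mul_pos (hv_pos n) (by linarith)
  have hC_pos : 0 < C := Real.rpow_pos_of_pos hvδ4 _
  have hC_eq : C = (4 : ℝ) ^ κ * (v n * δ) ^ (-κ) := by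
    have h4 : v n * (δ / 4) = (v n * δ) * (4 : ℝ)⁻¹ := by ring
    have h44 : ((4 : ℝ)⁻¹) ^ (-κ) = (4 : ℝ) ^ κ := by
      rw [Real.inv_rpow (by norm_num : (0:ℝ) ≤ 4),
        Real.rpow_neg (by norm_num : (0:ℝ) ≤ 4), inv_inv]
    rw [hC, h4, Real.mul_rpow hvδ.le (by norm_num), h44, mul_comm]
  have hrhs_eq : (4 : ℝ) ^ κ * (v n * δ) ^ (-κ) * ∫ θ, c θ ∂Pr = ∫ θ, g θ ∂Pr := by
    rw [hg, integral_mul_const, hC_eq, mul_comm]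
  rw [hrhs_eq]
  -- pointwise bound on S
  have hpt : ∀ θ ∈ S, f θ ≤ g θ := by
    intro θ hθ
    have key : ∀ u : ℝ, 0 < u → u < δ / 4 → f θ ≤ c θ * (v n * u) ^ (-κ) := by
      intro u hu hu4
      have hsub : {t : EuclideanSpace ℝ (Fin kη) | d t sy ≤ εn} ⊆
          {t : EuclideanSpace ℝ (Fin kη) | u < d t (b θ)} := by
        intro t ht
        simp only [Set.mem_setOf_eq] at ht ⊢
        have htr : d (b θ) b₀ ≤ d (b θ) t + d t sy + d sy b₀ := by
          calc d (b θ) b₀ ≤ d (b θ) sy + d sy b₀ := hd_tri _ _ _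
            _ ≤ (d (b θ) t + d t sy) + d sy b₀ := by
                have := hd_tri (b θ) t sy; linarith
        have hsymm : d (b θ) t = d t (b θ) := hd_symm _ _
        have hθ' : εstar + δ ≤ d (b θ) b₀ := hθ
        linarith
      have hfin : IsProbabilityMeasure (μ n θ) := hμ_prob n θ
      have hmono : f θ ≤ (μ n θ {t | u < d t (b θ)}).toReal := by
        apply ENNReal.toReal_mono (measure_ne_top _ _) (measure_mono hsub)
      exact hmono.trans (hA1 n θ u hu (by linarith))
    have hlim : Tendsto (fun u : ℝ => c θ * (v n * u) ^ (-κ)) (nhdsWithin (δ / 4) (Set.Iio (δ / 4)))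
        (nhds (g θ)) := by
      have h1' : ContinuousAt (fun u : ℝ => v n * u) (δ / 4) :=
        (continuous_const.mul continuous_id).continuousAt
      have h2' : ContinuousAt (fun x : ℝ => x ^ (-κ)) (v n * (δ / 4)) :=
        Real.continuousAt_rpow_const _ _ (Or.inl hvδ4.ne')
      exact ((continuousAt_const.mul (h2'.comp h1')).tendsto).mono_left nhdsWithin_le_nhds
    have hne : (nhdsWithin (δ / 4) (Set.Iio (δ / 4))).NeBot := nhdsLT_neBot _
    refine ge_of_tendsto hlim ?_
    filter_upwards [Ioo_mem_nhdsLT_of_mem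
      (show δ / 4 ∈ Set.Ioc 0 (δ / 4) from ⟨by linarith, le_refl _⟩)] with u hu
    exact key u hu.1 hu.2
  -- integrability case split
  by_cases hI : Integrable f (Pr.restrict S)
  · have hm := hI.aestronglyMeasurable
    set f₀ : Θ → ℝ := hm.mk f with hf₀
    have hmk : f =ᵐ[Pr.restrict S] f₀ := hm.ae_eq_mk
    have hf₀m : Measurable f₀ := hm.stronglyMeasurable_mk.measurable
    have hgm : Measurable g := hc_meas.mul measurable_const
    have hnull : Pr (toMeasurable (Pr.restrict S) {θ | ¬ f θ = f₀ θ} ∩ S) = 0 := by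
      have h0 : (Pr.restrict S) {θ | ¬ f θ = f₀ θ} = 0 := ae_iff.mp hmk
      have := Measure.restrict_apply (μ := Pr) (s := S)
        (measurableSet_toMeasurable (Pr.restrict S) {θ | ¬ f θ = f₀ θ})
      rw [← this, measure_toMeasurable, h0]
    have hAE : f₀ ≤ᵐ[Pr.restrict S] g := by
      have hms : MeasurableSet {θ | ¬ f₀ θ ≤ g θ} := by
        have : {θ | ¬ f₀ θ ≤ g θ} = {θ | g θ < f₀ θ} := by ext θ; simp [not_le]
        rw [this]; exact measurableSet_lt hgm hf₀m
      refine ae_iff.mpr ?_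
      rw [Measure.restrict_apply hms]
      refine measure_mono_null ?_ hnull
      intro θ hθ
      obtain ⟨hθ1, hθ2⟩ := hθ
      refine ⟨subset_toMeasurable _ _ ?_, hθ2⟩
      simp only [Set.mem_setOf_eq, not_le] at hθ1 ⊢
      intro heq
      exact absurd (heq ▸ hpt θ hθ2) (not_le.mpr hθ1)
    have hg_int : Integrable g Pr := hc_int.mul_const C
    have hg_nonneg : 0 ≤ᵐ[Pr] g :=
      Filter.Eventually.of_forall fun θ => mul_nonneg (hc_nonneg θ) hC_pos.le
    calc (∫ θ in S, f θ ∂Pr) = ∫ θ, f₀ θ ∂(Pr.restrict S) := integral_congr_ae hmk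
      _ ≤ ∫ θ, g θ ∂(Pr.restrict S) :=
          integral_mono_ae (hI.congr hmk) (hg_int.restrict) hAE
      _ ≤ ∫ θ, g θ ∂Pr :=
          integral_mono_measure Measure.restrict_le_self hg_nonneg hg_int
  · rw [integral_undef hI]
    exact integral_nonneg fun θ => mul_nonneg (hc_nonneg θ) hC_pos.le
end

section
/- Quantitative posterior bound from the proof of the concentration theorem, polynomial case: Under the hypotheses of the numerator bound and the denominator lower bound (context below), if d(s_y, b₀) ≤ min(δ/2, v_{0,n}^{-1}), δ ≥ 4(ε_n − ε*), δ/4 ≤ u₀, ε_n ≥ ε* + M v_n^{-1} + v_{0,n}^{-1}, (M/2)^κ ≥ M₀, and M v_n^{-1}/2 ≤ min(u₀, δ₀), then the ABC posterior satisfies the deterministic bound Π_ε[{θ : d(b(θ), b₀) ≥ ε* + δ} | s_y] ≤ (4^κ ∫_Θ c dΠ / C₁) · (M v_n^{-1}/2)^{-D} (v_n δ)^{-κ}. -/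
open MeasureTheory Filter Real

lemma ae_restrict_le_of_forall_mem' {α : Type*} [MeasurableSpace α] {μ : Measure α}
    {s : Set α} {f g : α → ℝ} (hf : AEMeasurable f μ) (hg : Measurable g)
    (h : ∀ x ∈ s, f x ≤ g x) : f ≤ᵐ[μ.restrict s] g := by
  obtain ⟨f', hf'meas, hff'⟩ := hf
  have hres : f =ᵐ[μ.restrict s] f' := ae_restrict_of_ae hff'
  have hT : MeasurableSet {x | g x < f' x} := measurableSet_lt hg hf'meas
  have hnull : μ.restrict s {x | g x < f' x} = 0 := by
    rw [Measure.restrict_apply hT]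
    refine measure_mono_null ?_ (ae_iff.mp hff')
    intro x ⟨hx1, hx2⟩
    have := h x hx2
    simp only [Set.mem_setOf_eq] at hx1 ⊢
    intro hfx
    rw [hfx] at this
    exact absurd this (not_le.mpr hx1)
  have h2 : f' ≤ᵐ[μ.restrict s] g := by
    rw [Filter.EventuallyLE, ae_iff]
    simpa [not_le] using hnull
  filter_upwards [hres, h2] with x hx1 hx2
  rw [hx1]; exact hx2

lemma ae_restrict_ge_of_forall_mem' {α : Type*} [MeasurableSpace α] {μ : Measure α}
    {s : Set α} {f g : α → ℝ} (hf : AEMeasurable f μ) (hg : Measurable g)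
    (h : ∀ x ∈ s, g x ≤ f x) : g ≤ᵐ[μ.restrict s] f := by
  obtain ⟨f', hf'meas, hff'⟩ := hf
  have hres : f =ᵐ[μ.restrict s] f' := ae_restrict_of_ae hff'
  have hT : MeasurableSet {x | f' x < g x} := measurableSet_lt hf'meas hg
  have hnull : μ.restrict s {x | f' x < g x} = 0 := by
    rw [Measure.restrict_apply hT]
    refine measure_mono_null ?_ (ae_iff.mp hff')
    intro x ⟨hx1, hx2⟩
    have := h x hx2
    simp only [Set.mem_setOf_eq] at hx1 ⊢
    intro hfx
    rw [hfx] at this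
    exact absurd this (not_le.mpr hx1)
  have h2 : g ≤ᵐ[μ.restrict s] f' := by
    rw [Filter.EventuallyLE, ae_iff]
    simpa [not_le] using hnull
  filter_upwards [hres, h2] with x hx1 hx2
  rw [hx1]; exact hx2


/-- **Quantitative posterior bound from the proof of the concentration theorem,
polynomial case**: under the hypotheses of the numerator bound and the denominator
lower bound, the ABC posterior mass of `{θ : d(b(θ), b₀) ≥ ε* + δ}` given `s_y` is at
most `(4^κ ∫_Θ c dΠ / C₁) (M v_n⁻¹/2)^{-D} (v_n δ)^{-κ}`. -/
theorem abc_posterior_quantitative_bound_polynomial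
    {kη : ℕ} {Θ : Type*} [MeasurableSpace Θ]
    (Pr : Measure Θ) [IsProbabilityMeasure Pr]
    -- d is a metric on ℝ^{kη}
    (d : EuclideanSpace ℝ (Fin kη) → EuclideanSpace ℝ (Fin kη) → ℝ)
    (hd_self : ∀ x, d x x = 0)
    (hd_eq : ∀ x y, d x y = 0 → x = y)
    (hd_symm : ∀ x y, d x y = d y x)
    (hd_tri : ∀ x y z, d x z ≤ d x y + d y z)
    -- laws of the simulated summary statistics, measurable in θ
    (n : ℕ)
    (μ : ℕ → Θ → Measure (EuclideanSpace ℝ (Fin kη)))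
    (hμ_prob : ∀ n θ, IsProbabilityMeasure (μ n θ))
    (hμ_meas : ∀ (n : ℕ) (s : Set (EuclideanSpace ℝ (Fin kη))), MeasurableSet s →
      Measurable fun θ => μ n θ s)
    (b : Θ → EuclideanSpace ℝ (Fin kη)) (hb_meas : Measurable b)
    (b₀ : EuclideanSpace ℝ (Fin kη))
    (c : Θ → ℝ) (hc_meas : Measurable c) (hc_nonneg : ∀ θ, 0 ≤ c θ)
    (hc_int : Integrable c Pr)
    (v v₀ : ℕ → ℝ) (hv_pos : ∀ n, 0 < v n) (hv₀_pos : ∀ n, 0 < v₀ n)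
    (u₀ κ : ℝ) (hu₀ : 0 < u₀) (hκ : 0 < κ)
    -- [A1], polynomial deviations
    (hA1 : ∀ (n : ℕ) (θ : Θ), ∀ u : ℝ, 0 < u → u ≤ u₀ →
      (μ n θ {t | u < d t (b θ)}).toReal ≤ c θ * (v n * u) ^ (-κ))
    -- ε* = inf_{θ∈Θ} d(b(θ), b₀)
    (εstar : ℝ) (hεstar : εstar = ⨅ θ : Θ, d (b θ) b₀)
    -- [A2](i)
    (D M₀ δ₀ C₁ : ℝ) (hD : 0 < D) (hM₀ : 0 < M₀) (hδ₀ : 0 < δ₀) (hC₁ : 0 < C₁)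
    (hA2 : ∀ δ' : ℝ, 0 < δ' → δ' ≤ δ₀ → ∀ M' : ℝ, M₀ ≤ M' →
      ∃ S : Set Θ, MeasurableSet S ∧
        S ⊆ {θ : Θ | d (b θ) b₀ - εstar ≤ δ'} ∧
        C₁ * δ' ^ D ≤ ∫ θ in S, (1 - c θ / M') ∂Pr)
    -- conditions on δ, M, ε_n and s_y
    (M δ εn : ℝ) (hM_pos : 0 < M) (hδ : 0 < δ) (hεn_pos : 0 < εn)
    (sy : EuclideanSpace ℝ (Fin kη))
    (hsy : d sy b₀ ≤ min (δ / 2) (v₀ n)⁻¹)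
    (h1 : 4 * (εn - εstar) ≤ δ)
    (h3 : δ / 4 ≤ u₀)
    (hεn : εstar + M * (v n)⁻¹ + (v₀ n)⁻¹ ≤ εn)
    (hM_large : M₀ ≤ (M / 2) ^ κ)
    (hM_small : M * (v n)⁻¹ / 2 ≤ min u₀ δ₀) :
    (∫ θ in {θ : Θ | εstar + δ ≤ d (b θ) b₀},
        (μ n θ {t | d t sy ≤ εn}).toReal ∂Pr) /
      (∫ θ, (μ n θ {t | d t sy ≤ εn}).toReal ∂Pr) ≤
    ((4 : ℝ) ^ κ * (∫ θ, c θ ∂Pr) / C₁) *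
      (M * (v n)⁻¹ / 2) ^ (-D) * (v n * δ) ^ (-κ) := by
  have hvn : 0 < v n := hv_pos n
  have hIc : 0 ≤ ∫ θ, c θ ∂Pr := integral_nonneg hc_nonneg
  set δ' : ℝ := M * (v n)⁻¹ / 2 with hδ'def
  have hδ'pos : 0 < δ' := by positivity
  have hδ'u₀ : δ' ≤ u₀ := hM_small.trans (min_le_left _ _)
  have hδ'δ₀ : δ' ≤ δ₀ := hM_small.trans (min_le_right _ _)
  have hvδpos : (0:ℝ) < v n * δ := by positivity
  have hRHS : 0 ≤ ((4 : ℝ) ^ κ * (∫ θ, c θ ∂Pr) / C₁) * δ' ^ (-D) * (v n * δ) ^ (-κ) := by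
    have h4 : (0:ℝ) ≤ (4:ℝ) ^ κ := (Real.rpow_pos_of_pos (by norm_num) κ).le
    have h5 : (0:ℝ) ≤ δ' ^ (-D) := (Real.rpow_pos_of_pos hδ'pos _).le
    have h6 : (0:ℝ) ≤ (v n * δ) ^ (-κ) := (Real.rpow_pos_of_pos hvδpos _).le
    exact mul_nonneg (mul_nonneg (div_nonneg (mul_nonneg h4 hIc) hC₁.le) h5) h6
  set f : Θ → ℝ := fun θ => (μ n θ {t | d t sy ≤ εn}).toReal with hf_def
  have hf_nonneg : ∀ θ, 0 ≤ f θ := fun θ => ENNReal.toReal_nonneg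
  rcases eq_or_lt_of_le (integral_nonneg hf_nonneg : 0 ≤ ∫ θ, f θ ∂Pr) with hDen | hDen
  · rw [← hDen, div_zero]; exact hRHS
  -- main case
  have hfi : Integrable f Pr := by
    by_contra h
    rw [integral_undef h] at hDen
    exact lt_irrefl _ hDen
  have hfae : AEMeasurable f Pr := hfi.aemeasurable
  -- numerator pointwise bound
  set K : ℝ := (v n * (δ / 4)) ^ (-κ) with hKdef
  have hnum_pt : ∀ θ ∈ {θ : Θ | εstar + δ ≤ d (b θ) b₀}, f θ ≤ c θ * K := by
    intro θ hθ
    haveI := hμ_prob n θ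
    simp only [Set.mem_setOf_eq] at hθ
    have hsub : ∀ u : ℝ, 0 < u → u < δ / 4 → f θ ≤ c θ * (v n * u) ^ (-κ) := by
      intro u hu hu4
      refine le_trans ?_ (hA1 n θ u hu (hu4.le.trans h3))
      refine ENNReal.toReal_mono (measure_ne_top _ _) (measure_mono ?_)
      intro t ht
      simp only [Set.mem_setOf_eq] at ht ⊢
      have t1 := hd_tri (b θ) t b₀
      have t2 := hd_tri t sy b₀
      have t3 := hd_symm (b θ) t
      have hsy1 : d sy b₀ ≤ δ / 2 := hsy.trans (min_le_left _ _)
      linarith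
    have hten : Tendsto (fun u : ℝ => c θ * (v n * u) ^ (-κ)) (nhdsWithin (δ/4) (Set.Iio (δ/4)))
        (nhds (c θ * K)) := by
      apply Tendsto.mono_left ?_ nhdsWithin_le_nhds
      have h2 : ContinuousAt (fun x : ℝ => x ^ (-κ)) (v n * (δ/4)) :=
        Real.continuousAt_rpow_const _ _ (Or.inl (by positivity))
      have h1 : ContinuousAt (fun u : ℝ => v n * u) (δ/4) :=
        (continuous_const.mul continuous_id).continuousAt
      exact (continuousAt_const.mul (h2.comp h1)).tendsto
    have hne : (nhdsWithin (δ/4) (Set.Iio (δ/4))).NeBot := by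
      apply nhdsLT_neBot
    refine ge_of_tendsto hten ?_
    have hmem : (δ/4) ∈ Set.Ioc (0:ℝ) (δ/4) := Set.mem_Ioc.mpr ⟨by linarith, le_refl _⟩
    filter_upwards [Ioo_mem_nhdsLT_of_mem hmem] with u hu
    exact hsub u hu.1 hu.2
  -- denominator pointwise bound
  set M' : ℝ := (M / 2) ^ κ with hM'def
  have hM2 : (0:ℝ) < M / 2 := by linarith
  have hM'pos : 0 < M' := Real.rpow_pos_of_pos hM2 κ
  have hden_pt : ∀ θ ∈ {θ : Θ | d (b θ) b₀ - εstar ≤ δ'}, 1 - c θ / M' ≤ f θ := by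
    intro θ hθ
    haveI := hμ_prob n θ
    simp only [Set.mem_setOf_eq] at hθ
    have hsub : {t | d t (b θ) ≤ δ'} ⊆ {t | d t sy ≤ εn} := by
      intro t ht
      simp only [Set.mem_setOf_eq] at ht ⊢
      have t1 := hd_tri t (b θ) b₀
      have t2 := hd_tri t b₀ sy
      have t3 := hd_symm b₀ sy
      have hsy2 : d sy b₀ ≤ (v₀ n)⁻¹ := hsy.trans (min_le_right _ _)
      have hdd : δ' + δ' = M * (v n)⁻¹ := by rw [hδ'def]; ring
      linarith
    have huniv : (Set.univ : Set (EuclideanSpace ℝ (Fin kη))) =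
        {t | d t (b θ) ≤ δ'} ∪ {t | δ' < d t (b θ)} := by
      ext t; simp [le_or_gt]
    have hcompl : (1:ℝ) ≤ (μ n θ {t | d t (b θ) ≤ δ'}).toReal +
        (μ n θ {t | δ' < d t (b θ)}).toReal := by
      have hle : μ n θ Set.univ ≤ μ n θ {t | d t (b θ) ≤ δ'} + μ n θ {t | δ' < d t (b θ)} := by
        rw [huniv]; exact measure_union_le _ _
      have := ENNReal.toReal_mono
        (by exact ENNReal.add_ne_top.mpr ⟨measure_ne_top _ _, measure_ne_top _ _⟩) hle
      rwa [measure_univ, ENNReal.toReal_one,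
        ENNReal.toReal_add (measure_ne_top _ _) (measure_ne_top _ _)] at this
    have hA1' := hA1 n θ δ' hδ'pos hδ'u₀
    have hval : c θ * (v n * δ') ^ (-κ) = c θ / M' := by
      have hvq : v n * δ' = M / 2 := by rw [hδ'def]; field_simp
      rw [hvq, Real.rpow_neg hM2.le, ← hM'def, div_eq_mul_inv]
    rw [hval] at hA1'
    have hmono : (μ n θ {t | d t (b θ) ≤ δ'}).toReal ≤ f θ :=
      ENNReal.toReal_mono (measure_ne_top _ _) (measure_mono hsub)
    linarith
  -- apply A2
  obtain ⟨S, hSmeas, hSsub, hSint⟩ := hA2 δ' hδ'pos hδ'δ₀ M' hM_large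
  -- denominator lower bound
  have hden_lb : C₁ * δ' ^ D ≤ ∫ θ, f θ ∂Pr := by
    calc C₁ * δ' ^ D ≤ ∫ θ in S, (1 - c θ / M') ∂Pr := hSint
      _ ≤ ∫ θ in S, f θ ∂Pr := by
          refine integral_mono_ae ?_ hfi.restrict ?_
          · exact ((integrable_const 1).sub (hc_int.div_const M')).restrict
          · exact ae_restrict_ge_of_forall_mem' hfae
              (measurable_const.sub (hc_meas.div_const M'))
              (fun θ hθ => hden_pt θ (hSsub hθ))
      _ ≤ ∫ θ, f θ ∂Pr := integral_mono_measure Measure.restrict_le_self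
          (Eventually.of_forall hf_nonneg) hfi
  -- numerator upper bound
  have hnum_ub : (∫ θ in {θ : Θ | εstar + δ ≤ d (b θ) b₀}, f θ ∂Pr) ≤
      (∫ θ, c θ ∂Pr) * K := by
    have hKnn : 0 ≤ K := Real.rpow_nonneg (by positivity) _
    calc (∫ θ in {θ : Θ | εstar + δ ≤ d (b θ) b₀}, f θ ∂Pr)
        ≤ ∫ θ in {θ : Θ | εstar + δ ≤ d (b θ) b₀}, c θ * K ∂Pr := by
          refine integral_mono_ae hfi.restrict (hc_int.mul_const K).restrict ?_
          exact ae_restrict_le_of_forall_mem' hfae (hc_meas.mul_const K) hnum_pt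
      _ ≤ ∫ θ, c θ * K ∂Pr := by
          refine integral_mono_measure Measure.restrict_le_self
            (Eventually.of_forall fun θ => mul_nonneg (hc_nonneg θ) hKnn)
            (hc_int.mul_const K)
      _ = (∫ θ, c θ ∂Pr) * K := integral_mul_const K _
  -- combine
  have hDbd : 0 < C₁ * δ' ^ D := mul_pos hC₁ (Real.rpow_pos_of_pos hδ'pos D)
  have hcomb : (∫ θ in {θ : Θ | εstar + δ ≤ d (b θ) b₀}, f θ ∂Pr) / (∫ θ, f θ ∂Pr) ≤
      ((∫ θ, c θ ∂Pr) * K) / (C₁ * δ' ^ D) := by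
    refine div_le_div₀ (mul_nonneg hIc (Real.rpow_nonneg (by positivity) _)) hnum_ub hDbd hden_lb
  refine hcomb.trans (le_of_eq ?_)
  have hK4 : K = 4 ^ κ * (v n * δ) ^ (-κ) := by
    have heq : v n * (δ / 4) = (v n * δ) * (4:ℝ)⁻¹ := by ring
    rw [hKdef, heq, Real.mul_rpow hvδpos.le (by norm_num),
      Real.inv_rpow (by norm_num : (0:ℝ) ≤ 4), Real.rpow_neg (by norm_num : (0:ℝ) ≤ 4) κ,
      inv_inv, mul_comm]
  rw [hK4, Real.rpow_neg hδ'pos.le D]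
  have hP : δ' ^ D ≠ 0 := (Real.rpow_pos_of_pos hδ'pos D).ne'
  field_simp
end

section
/- Limit of the nonlinear regression adjustment under misspecification: Let (Ω, P) be a probability space (for each n), and let θ_n, η_{y,n}, η_{z,n} be random variables with values in ℝ and ℝ^{k_η} respectively such that θ_n → θ* in probability, η_{y,n} → b₀ in probability, and η_{z,n} → b(θ*) in probability, where b₀ ≠ b(θ*) in general. Let m̂_n be random continuous functions from an open set U ⊆ ℝ^{k_η} containing b₀ and b(θ*) to ℝ, and let m* : U → ℝ be continuous, such that sup_{t ∈ K} |m̂_n(t) − m*(t)| → 0 in probability for some compact K ⊆ U containing neighborhoods of b₀ and of b(θ*). Then the nonlinearly adjusted draws θ̃_n := θ_n + m̂_n(η_{y,n}) − m̂_n(η_{z,n}) satisfy θ̃_n → θ* + m*(b₀) − m*(b(θ*)) in probability; in particular, whenever m*(b₀) ≠ m*(b(θ*)), the nonlinear regression adjustment concentrates on a value different from θ*. -/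
open MeasureTheory Filter
open scoped Topology

/-!
Write the adjusted draw minus its claimed limit as
`(θₙ + m*(η_y) − m*(η_z) − (θ* + m*(b₀) − m*(b(θ*)))) + (m̂ₙ − m*)(η_y) − (m̂ₙ − m*)(η_z)`.
The first bracket tends to `0` in probability by the continuous mapping theorem, `m*` being
continuous at `b₀` and `b(θ*)`. For the other two, a ball around `b₀` (resp. `b(θ*)`) lies in
`K`, so on the event that the summary falls in that ball the error is at most
`sup_K |m̂ₙ − m*|`; both that supremum and the probability of the complementary event vanish.
-/

namespace MeasureTheory

variable {ι α E F : Type*} [MeasurableSpace α] {μ : Measure α} {l : Filter ι}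

section PseudoMetric

variable [PseudoMetricSpace E] [PseudoMetricSpace F] {f : ι → α → E} {g : α → E}

theorem TendstoInMeasure.of_forall_dist_lt {f' : ι → α → F} {g' : α → F}
    (hf : TendstoInMeasure μ f l g)
    (h : ∀ ε > 0, ∃ δ > 0, ∀ i ω, dist (f i ω) (g ω) < δ → dist (f' i ω) (g' ω) < ε) :
    TendstoInMeasure μ f' l g' := by
  rw [tendstoInMeasure_iff_dist] at hf ⊢
  intro ε hε
  obtain ⟨δ, hδ, hδε⟩ := h ε hε
  refine tendsto_of_tendsto_of_tendsto_of_le_of_le tendsto_const_nhds (hf δ hδ)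
    (fun _ => zero_le) fun i => measure_mono fun ω => ?_
  simp only [Set.mem_ofPred_eq]
  contrapose!
  exact hδε i ω

theorem TendstoInMeasure.prodMk {f' : ι → α → F} {g' : α → F}
    (hf : TendstoInMeasure μ f l g) (hf' : TendstoInMeasure μ f' l g') :
    TendstoInMeasure μ (fun i ω => (f i ω, f' i ω)) l (fun ω => (g ω, g' ω)) := by
  rw [tendstoInMeasure_iff_dist] at hf hf' ⊢
  intro ε hε
  refine tendsto_of_tendsto_of_tendsto_of_le_of_le tendsto_const_nhds
    (by simpa using (hf ε hε).add (hf' ε hε)) (fun _ => zero_le)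
    fun i => (measure_mono fun ω hω => ?_).trans (measure_union_le _ _)
  simpa [Prod.dist_eq, le_max_iff] using hω

theorem _root_.UniformContinuous.comp_tendstoInMeasure {φ : E → F} (hφ : UniformContinuous φ)
    (hf : TendstoInMeasure μ f l g) :
    TendstoInMeasure μ (fun i ω => φ (f i ω)) l (fun ω => φ (g ω)) :=
  hf.of_forall_dist_lt fun ε hε =>
    let ⟨δ, hδ, hδε⟩ := Metric.uniformContinuous_iff.1 hφ ε hε
    ⟨δ, hδ, fun _ _ h => hδε h⟩

theorem _root_.ContinuousAt.comp_tendstoInMeasure_const {φ : E → F} {c : E}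
    (hφ : ContinuousAt φ c) (hf : TendstoInMeasure μ f l fun _ => c) :
    TendstoInMeasure μ (fun i ω => φ (f i ω)) l fun _ => φ c :=
  hf.of_forall_dist_lt fun ε hε =>
    let ⟨δ, hδ, hδε⟩ := Metric.continuousAt_iff.1 hφ ε hε
    ⟨δ, hδ, fun _ _ h => hδε h⟩

end PseudoMetric

section NormedGroup

variable [SeminormedAddCommGroup E] {f f' : ι → α → E} {g g' : α → E}

theorem TendstoInMeasure.add (hf : TendstoInMeasure μ f l g) (hf' : TendstoInMeasure μ f' l g') :
    TendstoInMeasure μ (fun i ω => f i ω + f' i ω) l (fun ω => g ω + g' ω) := by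
  have h := (uniformContinuous_add (α := E)).comp_tendstoInMeasure (hf.prodMk hf')
  exact h

theorem TendstoInMeasure.sub (hf : TendstoInMeasure μ f l g) (hf' : TendstoInMeasure μ f' l g') :
    TendstoInMeasure μ (fun i ω => f i ω - f' i ω) l (fun ω => g ω - g' ω) :=
  (uniformContinuous_sub (α := E)).comp_tendstoInMeasure (hf.prodMk hf')

theorem TendstoInMeasure.apply_sub_of_norm_le [PseudoMetricSpace F] {X : ι → α → F} {c : F}
    {K : Set F} (hK : K ∈ 𝓝 c) {m : ι → α → F → E} {m' : F → E} {S : ι → α → ℝ}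
    (hX : TendstoInMeasure μ X l fun _ => c) (hS : TendstoInMeasure μ S l fun _ => 0)
    (hmS : ∀ i ω, ∀ t ∈ K, ‖m i ω t - m' t‖ ≤ S i ω) :
    TendstoInMeasure μ (fun i ω => m i ω (X i ω) - m' (X i ω)) l fun _ => 0 := by
  obtain ⟨r, hr, hrK⟩ := Metric.mem_nhds_iff.1 hK
  refine (hX.prodMk hS).of_forall_dist_lt fun ε hε => ⟨min r ε, lt_min hr hε, fun i ω h => ?_⟩
  rw [Prod.dist_eq, max_lt_iff, lt_min_iff, lt_min_iff, Real.dist_0_eq_abs] at h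
  rw [dist_zero_right]
  calc ‖m i ω (X i ω) - m' (X i ω)‖ ≤ S i ω := hmS i ω _ (hrK h.1.1)
    _ ≤ |S i ω| := le_abs_self _
    _ < ε := h.2.2

end NormedGroup

end MeasureTheory

theorem ContinuousOn.abs_le_iSup_abs {X : Type*} [TopologicalSpace X] {K : Set X} {f : X → ℝ}
    (hf : ContinuousOn f K) (hK : IsCompact K) {t : X} (ht : t ∈ K) :
    |f t| ≤ ⨆ s : K, |f s| := by
  refine le_ciSup (f := fun s : K => |f s|) ?_ ⟨t, ht⟩
  obtain ⟨C, hC⟩ := hK.exists_bound_of_continuousOn hf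
  exact ⟨C, Set.forall_mem_range.2 fun s => hC s s.2⟩

theorem abc_nonlinear_regression_adjustment_limit_general
    {kη : ℕ}
    {Ω : Type*} [MeasurableSpace Ω]
    (P : Measure Ω)
    (θn : ℕ → Ω → ℝ)
    (ηy ηz : ℕ → Ω → EuclideanSpace ℝ (Fin kη))
    (θstar : ℝ) (b₀ bθstar : EuclideanSpace ℝ (Fin kη))
    (hθn : TendstoInMeasure P θn atTop (fun _ => θstar))
    (hηy : TendstoInMeasure P ηy atTop (fun _ => b₀))
    (hηz : TendstoInMeasure P ηz atTop (fun _ => bθstar))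
    (U : Set (EuclideanSpace ℝ (Fin kη)))
    (mhat : ℕ → Ω → EuclideanSpace ℝ (Fin kη) → ℝ)
    (hmhat_cont : ∀ n ω, ContinuousOn (mhat n ω) U)
    (mstar : EuclideanSpace ℝ (Fin kη) → ℝ) (hmstar_cont : ContinuousOn mstar U)
    (K : Set (EuclideanSpace ℝ (Fin kη))) (hK_cpt : IsCompact K) (hKU : K ⊆ U)
    (hb₀K : b₀ ∈ interior K) (hbθstarK : bθstar ∈ interior K)
    (hunif : TendstoInMeasure P
      (fun n ω => ⨆ t : K, |mhat n ω t.1 - mstar t.1|) atTop (fun _ => 0)) :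
    TendstoInMeasure P
      (fun n ω => θn n ω + mhat n ω (ηy n ω) - mhat n ω (ηz n ω)) atTop
      (fun _ => θstar + mstar b₀ - mstar bθstar) ∧
    (mstar b₀ ≠ mstar bθstar → θstar + mstar b₀ - mstar bθstar ≠ θstar) := by
  have hK₀ : K ∈ 𝓝 b₀ := mem_interior_iff_mem_nhds.1 hb₀K
  have hKθ : K ∈ 𝓝 bθstar := mem_interior_iff_mem_nhds.1 hbθstarK
  have hmstar_K : ContinuousOn mstar K := hmstar_cont.mono hKU
  have hsup : ∀ n ω, ∀ t ∈ K, ‖mhat n ω t - mstar t‖ ≤ ⨆ s : K, |mhat n ω s - mstar s| :=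
    fun n ω _ ht => ((hmhat_cont n ω).mono hKU |>.sub hmstar_K).abs_le_iSup_abs hK_cpt ht
  have hlimit : TendstoInMeasure P (fun n ω => θn n ω + mstar (ηy n ω) - mstar (ηz n ω)) atTop
      (fun _ => θstar + mstar b₀ - mstar bθstar) :=
    (hθn.add ((hmstar_K.continuousAt hK₀).comp_tendstoInMeasure_const hηy)).sub
      ((hmstar_K.continuousAt hKθ).comp_tendstoInMeasure_const hηz)
  have hsplit := (hlimit.add (hηy.apply_sub_of_norm_le hK₀ hunif hsup)).sub
    (hηz.apply_sub_of_norm_le hKθ hunif hsup)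
  refine ⟨?_, fun hne heq => hne (by linarith)⟩
  convert hsplit using 1
  · ext n ω
    ring
  · simp

/-- **Limit of the nonlinear regression adjustment under misspecification**: if the
accepted draws `θ_n` converge in probability to `θ*`, the observed and simulated
summaries converge in probability to `b₀` and `b(θ*)` respectively, and the estimated
regression functions `m̂_n` converge uniformly in probability on a compact set `K`
(containing neighborhoods of `b₀` and `b(θ*)`) to `m*`, then the adjusted draws
`θ̃_n = θ_n + m̂_n(η_{y,n}) − m̂_n(η_{z,n})` converge in probability to
`θ* + m*(b₀) − m*(b(θ*))`; in particular the latter differs from `θ*` whenever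
`m*(b₀) ≠ m*(b(θ*))`. -/
theorem abc_nonlinear_regression_adjustment_limit
    {kη : ℕ}
    {Ω : Type*} [MeasurableSpace Ω]
    (P : Measure Ω) [IsProbabilityMeasure P]
    (θn : ℕ → Ω → ℝ)
    (ηy ηz : ℕ → Ω → EuclideanSpace ℝ (Fin kη))
    (θstar : ℝ) (b₀ bθstar : EuclideanSpace ℝ (Fin kη))
    (hθn : TendstoInMeasure P θn atTop (fun _ => θstar))
    (hηy : TendstoInMeasure P ηy atTop (fun _ => b₀))
    (hηz : TendstoInMeasure P ηz atTop (fun _ => bθstar))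
    (U : Set (EuclideanSpace ℝ (Fin kη))) (hU : IsOpen U)
    (hb₀U : b₀ ∈ U) (hbθstarU : bθstar ∈ U)
    (mhat : ℕ → Ω → EuclideanSpace ℝ (Fin kη) → ℝ)
    (hmhat_cont : ∀ n ω, ContinuousOn (mhat n ω) U)
    (mstar : EuclideanSpace ℝ (Fin kη) → ℝ) (hmstar_cont : ContinuousOn mstar U)
    (K : Set (EuclideanSpace ℝ (Fin kη))) (hK_cpt : IsCompact K) (hKU : K ⊆ U)
    (hb₀K : b₀ ∈ interior K) (hbθstarK : bθstar ∈ interior K)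
    (hunif : TendstoInMeasure P
      (fun n ω => ⨆ t : K, |mhat n ω t.1 - mstar t.1|) atTop (fun _ => 0)) :
    TendstoInMeasure P
      (fun n ω => θn n ω + mhat n ω (ηy n ω) - mhat n ω (ηz n ω)) atTop
      (fun _ => θstar + mstar b₀ - mstar bθstar) ∧
    (mstar b₀ ≠ mstar bθstar → θstar + mstar b₀ - mstar bθstar ≠ θstar) :=
  abc_nonlinear_regression_adjustment_limit_general P θn ηy ηz θstar b₀ bθstar hθn hηy hηz U mhat
    hmhat_cont mstar hmstar_cont K hK_cpt hKU hb₀K hbθstarK hunif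
end
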